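/- Let p be a prime and let R = ℤ_p be the ring of p-adic integers. Then for every s ∈ R, the generalized matrix ring K_s(R) is quasipolar. -/

import Mathlib

/-- The generalized matrix ring `K_s(R)` with multiplier `s`. -/
@[ext]
structure GenMatrix (R : Type*) (s : R) where
  a : R
  b : R
  c : R
  d : R

namespace GenMatrix

variable {R : Type*} [Ring R] {s : R}

instance : Add (GenMatrix R s) :=
  ⟨fun X Y => ⟨X.a + Y.a, X.b + Y.b, X.c + Y.c, X.d + Y.d⟩⟩
instance : Neg (GenMatrix R s) := ⟨fun X => ⟨-X.a, -X.b, -X.c, -X.d⟩⟩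
instance : Zero (GenMatrix R s) := ⟨⟨0, 0, 0, 0⟩⟩
instance : One (GenMatrix R s) := ⟨⟨1, 0, 0, 1⟩⟩
instance : Mul (GenMatrix R s) :=
  ⟨fun X Y => ⟨X.a * Y.a + s * (X.b * Y.c), X.a * Y.b + X.b * Y.d,
    X.c * Y.a + X.d * Y.c, s * (X.c * Y.b) + X.d * Y.d⟩⟩

@[simp] lemma add_a (X Y : GenMatrix R s) : (X + Y).a = X.a + Y.a := rfl
@[simp] lemma add_b (X Y : GenMatrix R s) : (X + Y).b = X.b + Y.b := rfl
@[simp] lemma add_c (X Y : GenMatrix R s) : (X + Y).c = X.c + Y.c := rfl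
@[simp] lemma add_d (X Y : GenMatrix R s) : (X + Y).d = X.d + Y.d := rfl
@[simp] lemma neg_a (X : GenMatrix R s) : (-X).a = -X.a := rfl
@[simp] lemma neg_b (X : GenMatrix R s) : (-X).b = -X.b := rfl
@[simp] lemma neg_c (X : GenMatrix R s) : (-X).c = -X.c := rfl
@[simp] lemma neg_d (X : GenMatrix R s) : (-X).d = -X.d := rfl
@[simp] lemma zero_a : (0 : GenMatrix R s).a = 0 := rfl
@[simp] lemma zero_b : (0 : GenMatrix R s).b = 0 := rfl
@[simp] lemma zero_c : (0 : GenMatrix R s).c = 0 := rfl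
@[simp] lemma zero_d : (0 : GenMatrix R s).d = 0 := rfl
@[simp] lemma one_a : (1 : GenMatrix R s).a = 1 := rfl
@[simp] lemma one_b : (1 : GenMatrix R s).b = 0 := rfl
@[simp] lemma one_c : (1 : GenMatrix R s).c = 0 := rfl
@[simp] lemma one_d : (1 : GenMatrix R s).d = 1 := rfl
@[simp] lemma mul_a (X Y : GenMatrix R s) : (X * Y).a = X.a * Y.a + s * (X.b * Y.c) := rfl
@[simp] lemma mul_b (X Y : GenMatrix R s) : (X * Y).b = X.a * Y.b + X.b * Y.d := rfl
@[simp] lemma mul_c (X Y : GenMatrix R s) : (X * Y).c = X.c * Y.a + X.d * Y.c := rfl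
@[simp] lemma mul_d (X Y : GenMatrix R s) : (X * Y).d = s * (X.c * Y.b) + X.d * Y.d := rfl

instance : AddCommGroup (GenMatrix R s) where
  add_assoc X Y Z := by ext <;> simp [add_assoc]
  zero_add X := by ext <;> simp
  add_zero X := by ext <;> simp
  add_comm X Y := by ext <;> simp [add_comm]
  neg_add_cancel X := by ext <;> simp
  nsmul := nsmulRec
  zsmul := zsmulRec

section Central

variable [Fact (s ∈ Set.center R)]

lemma scomm (r : R) : r * s = s * r := Semigroup.mem_center_iff.mp Fact.out r

lemma sshift (r t : R) : r * (s * t) = s * (r * t) := by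
  rw [← mul_assoc, scomm (s := s), mul_assoc]

instance : Ring (GenMatrix R s) where
  __ := (inferInstance : AddCommGroup (GenMatrix R s))
  left_distrib X Y Z := by ext <;> simp [mul_add, add_mul] <;> abel
  right_distrib X Y Z := by ext <;> simp [mul_add, add_mul] <;> abel
  zero_mul X := by ext <;> simp
  mul_zero X := by ext <;> simp
  mul_assoc X Y Z := by
    ext <;> simp only [mul_a, mul_b, mul_c, mul_d, mul_add, add_mul, mul_assoc, sshift] <;> abel
  one_mul X := by ext <;> simp
  mul_one X := by ext <;> simp

end Central

instance central_of_comm {R : Type*} [CommRing R] (s : R) : Fact (s ∈ Set.center R) :=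
  ⟨by rw [Set.center_eq_univ]; trivial⟩

/-- `det_s` of a generalized matrix over a commutative ring. -/
def dets {R : Type*} {s : R} [CommRing R] (A : GenMatrix R s) : R :=
  A.a * A.d - s * (A.b * A.c)

/-- The trace of a generalized matrix. -/
def tr {R : Type*} {s : R} [Ring R] (A : GenMatrix R s) : R := A.a + A.d

end GenMatrix

/-- An element `a` is quasinilpotent if `1 + a*x` is a unit for every `x` commuting with `a`. -/
def IsQuasinilpotent {R : Type*} [Ring R] (a : R) : Prop :=
  ∀ x : R, a * x = x * a → IsUnit (1 + a * x)

/-- An element `a` is quasipolar if there is an idempotent `p` in the double commutant of `a`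
with `a + p` a unit and `a * p` quasinilpotent. -/
def IsQuasipolar {R : Type*} [Ring R] (a : R) : Prop :=
  ∃ p : R, IsIdempotentElem p ∧ (∀ y : R, y * a = a * y → p * y = y * p) ∧
    IsUnit (a + p) ∧ IsQuasinilpotent (a * p)

/-- A ring is quasipolar if every element is quasipolar. -/
def IsQuasipolarRing (R : Type*) [Ring R] : Prop := ∀ a : R, IsQuasipolar a

/-- An element is strongly clean if it is the sum of an idempotent and a unit that commute. -/
def IsStronglyClean {R : Type*} [Ring R] (a : R) : Prop :=
  ∃ e u : R, IsIdempotentElem e ∧ IsUnit u ∧ a = e + u ∧ e * u = u * e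

/-- A ring is strongly clean if every element is strongly clean. -/
def IsStronglyCleanRing (R : Type*) [Ring R] : Prop := ∀ a : R, IsStronglyClean a

/-- `a` is similar to `b` if `b = u⁻¹ * a * u` for some unit `u`. -/
def IsSimilar {R : Type*} [Ring R] (a b : R) : Prop :=
  ∃ u : Rˣ, b = ↑u⁻¹ * a * ↑u

/-- The Jacobson radical of a ring: the intersection of all maximal left ideals. -/
def JacobsonRadical (R : Type*) [Ring R] : Ideal R := Ideal.jacobson ⊥

/-!
Over a commutative local ring `R` with maximal ideal `m`, sort `A ∈ K_s(R)` by its characteristic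
polynomial `χ = X² - tr A • X + det_s A`. If `det_s A` is a unit, so is `A`, and `p = 0` works.
If `tr A, det_s A ∈ m`, then `A² = tr A • A - det_s A` lies in `m K_s(R)`, which forces
`tr (A X) ∈ m` and `det_s (A X) ∈ m` for every `X` commuting with `A`; so `A` is quasinilpotent
and `p = 1` works. Otherwise `χ` has the simple root `0` modulo `m`, and if `R` is Henselian
(as `ℤ_p` is, being `p`-adically complete) it factors as `(X - α) (X - β)` with `β ∈ m` and `α`
a unit; then `p = (A - α) / (β - α)`, the projection onto the `β`-eigenspace, works.
-/

open IsLocalRing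

section Quasipolar

variable {R : Type*} [Ring R]

lemma isQuasinilpotent_zero : IsQuasinilpotent (0 : R) :=
  fun _ _ => by simp

lemma IsUnit.isQuasipolar {a : R} (ha : IsUnit a) : IsQuasipolar a :=
  ⟨0, .zero, fun y _ => by simp, by simpa using ha, by simpa using isQuasinilpotent_zero⟩

lemma IsQuasinilpotent.isQuasipolar_of_isUnit_add_one {a : R} (ha : IsQuasinilpotent a)
    (hu : IsUnit (a + 1)) : IsQuasipolar a :=
  ⟨1, .one, fun y _ => by simp, hu, by simpa using ha⟩

end Quasipolar

lemma IsLocalRing.isUnit_add_of_mem_maximalIdeal {R : Type*} [CommRing R] [IsLocalRing R]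
    {u x : R} (hu : IsUnit u) (hx : x ∈ maximalIdeal R) : IsUnit (u + x) := by
  rw [← notMem_maximalIdeal] at hu ⊢
  exact fun h => hu (by simpa using sub_mem h hx)

theorem HenselianLocalRing.of_henselianRing (R : Type*) [CommRing R] [IsLocalRing R]
    [HenselianRing R (maximalIdeal R)] : HenselianLocalRing R where
  is_henselian f hf a₀ h₁ h₂ := HenselianRing.is_henselian f hf a₀ h₁ (h₂.map _)

instance PadicInt.henselianLocalRing (p : ℕ) [Fact p.Prime] : HenselianLocalRing ℤ_[p] :=
  .of_henselianRing ℤ_[p]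

open Polynomial in
lemma HenselianLocalRing.exists_root_quadratic_mem_maximalIdeal {R : Type*} [CommRing R]
    [HenselianLocalRing R] {t δ : R} (ht : IsUnit t) (hδ : δ ∈ maximalIdeal R) :
    ∃ β ∈ maximalIdeal R, β ^ 2 - t * β + δ = 0 := by
  have hmonic : (X ^ 2 - C t * X + C δ : R[X]).Monic := by
    rw [sub_add]
    exact monic_X_pow_sub (by compute_degree!)
  obtain ⟨β, hroot, hβ⟩ := HenselianLocalRing.is_henselian _ hmonic 0 (by simpa using hδ)
    (by simpa [derivative_X_pow] using ht.neg)
  exact ⟨β, by simpa using hβ, by simpa using hroot⟩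

namespace GenMatrix

section CommRing

variable {R : Type*} [CommRing R] {s : R}

lemma dets_mul (X Y : GenMatrix R s) : dets (X * Y) = dets X * dets Y := by
  simp only [dets, mul_a, mul_b, mul_c, mul_d]; ring

lemma dets_one_add (X : GenMatrix R s) : dets (1 + X) = 1 + (tr X + dets X) := by
  simp only [dets, tr, add_a, add_b, add_c, add_d, one_a, one_b, one_c, one_d]; ring

lemma tr_sq (X : GenMatrix R s) : tr X ^ 2 = tr (X * X) + 2 * dets X := by
  simp only [dets, tr, mul_a, mul_d]; ring

/-- Cayley–Hamilton `A² = tr A • A - det_s A`, multiplied by `Z` and traced. -/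
lemma tr_mul_self_mul (A Z : GenMatrix R s) :
    tr (A * A * Z) = tr A * tr (A * Z) - dets A * tr Z := by
  simp only [dets, tr, mul_a, mul_b, mul_c, mul_d]; ring

lemma isUnit_of_isUnit_dets {A : GenMatrix R s} (h : IsUnit (dets A)) : IsUnit A := by
  obtain ⟨u, hu⟩ := h
  have hv : (↑u⁻¹ : R) * (A.a * A.d - s * (A.b * A.c)) = 1 := by
    rw [← dets, ← hu, Units.inv_mul]
  refine isUnit_iff_exists.mpr
    ⟨⟨↑u⁻¹ * A.d, -(↑u⁻¹ * A.b), -(↑u⁻¹ * A.c), ↑u⁻¹ * A.a⟩, ?_, ?_⟩ <;>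
    ext <;> simp only [mul_a, mul_b, mul_c, mul_d, one_a, one_b, one_c, one_d] <;>
    first | ring1 | linear_combination hv

/-- `v (A - α)`, where `α = tr A - β`. If `β` is a root of the characteristic polynomial of `A`
and `v = (β - α)⁻¹`, this is the projection onto the `β`-eigenspace along the `α`-eigenspace. -/
def spectralProj (A : GenMatrix R s) (β v : R) : GenMatrix R s :=
  ⟨v * (β - A.d), v * A.b, v * A.c, v * (β - A.a)⟩

lemma spectralProj_mul_comm {A Y : GenMatrix R s} (β v : R) (hY : Y * A = A * Y) :
    spectralProj A β v * Y = Y * spectralProj A β v := by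
  have ha := congrArg a hY
  have hb := congrArg b hY
  have hc := congrArg c hY
  have hd := congrArg d hY
  simp only [mul_a, mul_b, mul_c, mul_d] at ha hb hc hd
  ext <;> simp only [spectralProj, mul_a, mul_b, mul_c, mul_d]
  · linear_combination (-v) * ha
  · linear_combination (-v) * hb
  · linear_combination (-v) * hc
  · linear_combination (-v) * hd

variable {A : GenMatrix R s} {β v : R}

lemma isIdempotentElem_spectralProj (hβ : β ^ 2 - tr A * β + dets A = 0)
    (hv : v * (2 * β - tr A) = 1) : IsIdempotentElem (spectralProj A β v) := by
  rw [tr, dets] at hβ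
  rw [tr] at hv
  show _ * _ = _
  ext <;> simp only [spectralProj, mul_a, mul_b, mul_c, mul_d]
  · linear_combination (v * (β - A.d)) * hv - v ^ 2 * hβ
  · linear_combination (v * A.b) * hv
  · linear_combination (v * A.c) * hv
  · linear_combination (v * (β - A.a)) * hv - v ^ 2 * hβ

lemma tr_mul_spectralProj (hβ : β ^ 2 - tr A * β + dets A = 0)
    (hv : v * (2 * β - tr A) = 1) : tr (A * spectralProj A β v) = β := by
  rw [tr, dets] at hβ
  rw [tr] at hv
  simp only [tr, spectralProj, mul_a, mul_d]
  linear_combination β * hv - 2 * v * hβ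

lemma dets_add_spectralProj (hβ : β ^ 2 - tr A * β + dets A = 0)
    (hv : v * (2 * β - tr A) = 1) : dets (A + spectralProj A β v) = (tr A - β) * (β + 1) := by
  rw [tr, dets] at hβ
  rw [tr] at hv
  simp only [tr, dets, spectralProj, add_a, add_b, add_c, add_d]
  linear_combination (v ^ 2 + 2 * v + 1) * hβ + (A.a + A.d - β) * hv

section LocalRing

variable [IsLocalRing R]

lemma isUnit_one_add_of_tr_mem_of_dets_mem {X : GenMatrix R s} (ht : tr X ∈ maximalIdeal R)
    (hd : dets X ∈ maximalIdeal R) : IsUnit (1 + X) := by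
  apply isUnit_of_isUnit_dets
  rw [dets_one_add]
  exact isUnit_add_of_mem_maximalIdeal isUnit_one (add_mem ht hd)

lemma isQuasinilpotent_of_tr_mem_of_dets_mem (ht : tr A ∈ maximalIdeal R)
    (hd : dets A ∈ maximalIdeal R) : IsQuasinilpotent A := by
  intro X hX
  have hdets : dets (A * X) ∈ maximalIdeal R := by
    rw [dets_mul]
    exact Ideal.mul_mem_right _ _ hd
  have hsq : A * X * (A * X) = A * A * (X * X) := by
    rw [mul_assoc, ← mul_assoc X, ← hX]
    simp only [mul_assoc]
  have htr_sq : tr (A * X * (A * X)) ∈ maximalIdeal R := by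
    rw [hsq, tr_mul_self_mul]
    exact sub_mem (Ideal.mul_mem_right _ _ ht) (Ideal.mul_mem_right _ _ hd)
  refine isUnit_one_add_of_tr_mem_of_dets_mem ?_ hdets
  refine (maximalIdeal.isMaximal R).isPrime.mem_of_pow_mem 2 ?_
  rw [tr_sq]
  exact add_mem htr_sq (Ideal.mul_mem_left _ _ hdets)

lemma isQuasipolar_of_root_mem_maximalIdeal (hβ : β ^ 2 - tr A * β + dets A = 0)
    (hβm : β ∈ maximalIdeal R) (ht : IsUnit (tr A)) : IsQuasipolar A := by
  have hα : IsUnit (tr A - β) := by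
    rw [sub_eq_add_neg]
    exact isUnit_add_of_mem_maximalIdeal ht (neg_mem hβm)
  obtain ⟨v, hv⟩ : ∃ v, v * (2 * β - tr A) = 1 := by
    refine (isUnit_add_of_mem_maximalIdeal hα.neg hβm).exists_left_inv.imp fun v hv => ?_
    linear_combination hv
  have hd : dets A ∈ maximalIdeal R := by
    rw [show dets A = (tr A - β) * β by linear_combination hβ]
    exact Ideal.mul_mem_left _ _ hβm
  refine ⟨spectralProj A β v, isIdempotentElem_spectralProj hβ hv,
    fun Y hY => spectralProj_mul_comm β v hY, ?_, ?_⟩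
  · apply isUnit_of_isUnit_dets
    rw [dets_add_spectralProj hβ hv, add_comm β]
    exact hα.mul (isUnit_add_of_mem_maximalIdeal isUnit_one hβm)
  · apply isQuasinilpotent_of_tr_mem_of_dets_mem
    · rwa [tr_mul_spectralProj hβ hv]
    · rw [dets_mul]
      exact Ideal.mul_mem_right _ _ hd

end LocalRing

theorem isQuasipolarRing_of_henselianLocalRing [HenselianLocalRing R] (s : R) :
    IsQuasipolarRing (GenMatrix R s) := by
  intro A
  by_cases hd : IsUnit (dets A)
  · exact (isUnit_of_isUnit_dets hd).isQuasipolar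
  rw [← notMem_maximalIdeal, not_not] at hd
  by_cases ht : tr A ∈ maximalIdeal R
  · refine (isQuasinilpotent_of_tr_mem_of_dets_mem ht hd).isQuasipolar_of_isUnit_add_one ?_
    rw [add_comm]
    exact isUnit_one_add_of_tr_mem_of_dets_mem ht hd
  · rw [notMem_maximalIdeal] at ht
    obtain ⟨β, hβm, hβ⟩ := HenselianLocalRing.exists_root_quadratic_mem_maximalIdeal ht hd
    exact isQuasipolar_of_root_mem_maximalIdeal hβ hβm ht

end CommRing

end GenMatrix

/-- for a prime `p` and the ring `ℤ_p` of `p`-adic integers, `K_s(ℤ_p)` is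
quasipolar for every `s ∈ ℤ_p`. -/
theorem genMatrix_padicInt_isQuasipolarRing (p : ℕ) [Fact p.Prime] (s : PadicInt p) :
    IsQuasipolarRing (GenMatrix (PadicInt p) s) :=
  GenMatrix.isQuasipolarRing_of_henselianLocalRing s
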